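/- Let k, m ∈ ℕ with k ≤ m, 0 < τ < 1 and θ := k/(m+τ). Then there is a constant C such that ‖f‖_{C^k_b(ℝⁿ)} ≤ C ‖f‖_{C^0_b(ℝⁿ)}^{1-θ} ‖f‖_{C^{m,τ}(ℝⁿ)}^{θ} for all f ∈ C^{m,τ}(ℝⁿ). -/

import Mathlib

noncomputable section

variable {n : ℕ} {F : Type*} [NormedAddCommGroup F] [NormedSpace ℝ F]

/-- Sup of the norms of all derivatives of order `≤ k` (the `C^k_b` norm). -/
noncomputable def CbNorm (k : ℕ) (f : EuclideanSpace ℝ (Fin n) → F) : ℝ :=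
  ⨆ i : Fin (k + 1), ⨆ x, ‖iteratedFDeriv ℝ i.val f x‖

open Classical in
/-- Hölder seminorm of exponent `τ`: `sup_{x ≠ y} ‖g x - g y‖ / ‖x-y‖^τ`. -/
noncomputable def holderSemi (τ : ℝ) (g : EuclideanSpace ℝ (Fin n) → F) : ℝ :=
  ⨆ p : EuclideanSpace ℝ (Fin n) × EuclideanSpace ℝ (Fin n),
    if p.1 = p.2 then 0 else ‖g p.1 - g p.2‖ / ‖p.1 - p.2‖ ^ τ

/-- The `C^{m,τ}` (Hölder) norm: `C^m_b` norm plus the Hölder seminorms of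
all derivatives of order `≤ m`. -/
noncomputable def CmTauNorm (m : ℕ) (τ : ℝ) (f : EuclideanSpace ℝ (Fin n) → F) : ℝ :=
  CbNorm m f + ⨆ i : Fin (m + 1), holderSemi τ (iteratedFDeriv ℝ i.val f)

/-- Membership in the Hölder space `C^{m,τ}(ℝⁿ)`: `f` is `m` times continuously
differentiable, all derivatives up to order `m` are bounded and `τ`-Hölder continuous. -/
def MemHolderSpace (m : ℕ) (τ : ℝ) (f : EuclideanSpace ℝ (Fin n) → F) : Prop :=
  ContDiff ℝ m f ∧
    (∀ i ≤ m, ∃ C : ℝ, ∀ x, ‖iteratedFDeriv ℝ i f x‖ ≤ C) ∧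
    (∀ i ≤ m, ∃ C : ℝ, ∀ x y,
      ‖iteratedFDeriv ℝ i f x - iteratedFDeriv ℝ i f y‖ ≤ C * ‖x - y‖ ^ τ)

/-!
Write `M_j = sup_x ‖D^j f x‖` and `Q = ‖f‖_{C^{m,τ}}`. Comparing `D^j f` at `x` and `x + t v` with
its first-order Taylor expansion gives, for every `t > 0`, the Landau-type inequalities
`M_{j+1} ≤ 2 M_j / t + t M_{j+2}` and `M_m ≤ 2 M_{m-1} / t + t ^ τ Q`. Optimising in `t` shows
that `j ↦ log M_j` is convex up to a bounded defect, the Hölder bound acting as one more point of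
the sequence at abscissa `m + τ` with value `log Q`; convexity then bounds `log M_k` by the chord
`(1 - θ) log M_0 + θ log Q`. The logarithms need `M_j > 0`, which is arranged by adding `δ > 0`
to every `M_j` and `Q` and letting `δ → 0`.
-/

open Real Set

section ConvexSequence

variable {r : ℕ → ℝ} {m : ℕ}

theorem sub_le_sub_of_convex_seq
    (hconv : ∀ j, j + 2 ≤ m → 2 * r (j + 1) ≤ r j + r (j + 2)) {i j : ℕ} (hij : i ≤ j)
    (hj : j + 1 ≤ m) : r (i + 1) - r i ≤ r (j + 1) - r j := by
  induction j, hij using Nat.le_induction with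
  | base => rfl
  | succ j hij ih => linarith [ih (by omega), hconv j (by omega)]

-- `(1 + τ) * r m - τ * r (m - 1)` is the value at `m + τ` of the line through the last two points.
theorem mul_le_of_convex_seq (hconv : ∀ j, j + 2 ≤ m → 2 * r (j + 1) ≤ r j + r (j + 2))
    (hm : 0 < m) {k : ℕ} (hkm : k ≤ m) {τ : ℝ} (hτ : 0 ≤ τ) :
    (m + τ) * r k ≤ (m - k + τ) * r 0 + k * ((1 + τ) * r m - τ * r (m - 1)) := by
  cases k with
  | zero => simp
  | succ k =>
    set s := r (k + 1) - r k
    have hbelow : r (k + 1) - r 0 ≤ (k + 1 : ℕ) * s := by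
      have := Finset.sum_le_card_nsmul (Finset.range (k + 1)) _ s fun i hi =>
        sub_le_sub_of_convex_seq hconv (Finset.mem_range_succ_iff.mp hi) (by omega)
      rwa [Finset.sum_range_sub, Finset.card_range, nsmul_eq_mul] at this
    have habove : (m - (k + 1) : ℕ) * s ≤ r m - r (k + 1) := by
      have := Finset.card_nsmul_le_sum (Finset.range (m - (k + 1)))
        (fun i => r (k + 1 + (i + 1)) - r (k + 1 + i)) s fun i hi => by
          have := Finset.mem_range.mp hi
          simpa only [add_assoc] using
            sub_le_sub_of_convex_seq hconv (i := k) (j := k + 1 + i) (by omega) (by omega)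
      rwa [Finset.sum_range_sub (fun i => r (k + 1 + i)), Finset.card_range, nsmul_eq_mul,
        add_zero, Nat.add_sub_cancel' hkm] at this
    have htop : s ≤ r m - r (m - 1) := by
      simpa only [Nat.sub_add_cancel hm] using
        sub_le_sub_of_convex_seq hconv (j := m - 1) (by omega) (by omega)
    rw [Nat.cast_sub hkm] at habove
    push_cast at hbelow habove ⊢
    have hk : (k + 1 : ℝ) ≤ m := by exact_mod_cast hkm
    nlinarith [mul_le_mul_of_nonneg_left hbelow (by linarith : (0 : ℝ) ≤ m - (k + 1) + τ),
      mul_le_mul_of_nonneg_left htop hτ]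

theorem le_of_convex_seq_up_to_defect {p : ℕ → ℝ} {L q τ : ℝ} (hL : 0 ≤ L)
    (hmid : ∀ j, j + 2 ≤ m → 2 * p (j + 1) ≤ L + p j + p (j + 2))
    (htop : (1 + τ) * p m ≤ L + q + τ * p (m - 1))
    (hm : 0 < m) {k : ℕ} (hkm : k ≤ m) (hτ0 : 0 ≤ τ) (hτ1 : τ ≤ 1) :
    p k ≤ (1 - k / (m + τ)) * p 0 + k / (m + τ) * q + (m + 1) ^ 2 * L := by
  -- adding `L j² / 2` turns the defect into genuine convexity
  set r : ℕ → ℝ := fun j => p j + L / 2 * j ^ 2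
  have hconv : ∀ j, j + 2 ≤ m → 2 * r (j + 1) ≤ r j + r (j + 2) := fun j hj => by
    simp only [r]; push_cast; nlinarith [hmid j hj]
  have key := mul_le_of_convex_seq hconv hm hkm hτ0
  have hm1 : ((m - 1 : ℕ) : ℝ) = m - 1 := by rw [Nat.cast_sub hm]; simp
  simp only [r, hm1, Nat.cast_zero] at key
  have hk : (k : ℝ) ≤ m := by exact_mod_cast hkm
  have hm' : (1 : ℝ) ≤ m := by exact_mod_cast hm
  have hmτ : (0 : ℝ) < m + τ := by linarith
  have hdefect : k * (1 + (m ^ 2 + τ * (2 * m - 1)) / 2) * L ≤ (m + τ) * (m + 1) ^ 2 * L := by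
    refine mul_le_mul_of_nonneg_right (mul_le_mul (by linarith) ?_ (by nlinarith) hmτ.le) hL
    nlinarith
  have hexpand : (m + τ) * ((1 - k / (m + τ)) * p 0 + k / (m + τ) * q + (m + 1) ^ 2 * L)
      = (m - k + τ) * p 0 + k * q + (m + τ) * (m + 1) ^ 2 * L := by
    field_simp; ring
  rw [← mul_le_mul_iff_right₀ hmτ, hexpand]
  nlinarith [mul_le_mul_of_nonneg_left htop (Nat.cast_nonneg k : (0 : ℝ) ≤ k),
    mul_nonneg (mul_nonneg hmτ.le hL) (sq_nonneg (k : ℝ))]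

end ConvexSequence

theorem rpow_one_add_le_of_forall_le_div_add_rpow_mul {a b c σ : ℝ} (ha : 0 < a) (hb : 0 < b)
    (hc : 0 < c) (hσ0 : 0 < σ) (hσ1 : σ ≤ 1) (h : ∀ t > 0, a ≤ 2 * b / t + t ^ σ * c) :
    a ^ (1 + σ) ≤ 8 * c * b ^ σ := by
  -- the scale `t` with `t ^ σ * c = a / 2`
  set t := (a / (2 * c)) ^ σ⁻¹
  have ht : 0 < t := by positivity
  have htσ : t ^ σ = a / (2 * c) := by
    rw [← rpow_mul (by positivity), inv_mul_cancel₀ hσ0.ne', rpow_one]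
  have hat : a * t ≤ 4 * b := by
    have := h t ht
    have hhalf : a / (2 * c) * c = a / 2 := by field_simp
    rw [htσ, hhalf] at this
    have : a / 2 ≤ 2 * b / t := by linarith
    rw [le_div_iff₀ ht] at this
    linarith
  have h4 : (4 : ℝ) ^ σ ≤ 4 := by
    simpa using rpow_le_rpow_of_exponent_le (by norm_num : (1 : ℝ) ≤ 4) hσ1
  calc a ^ (1 + σ) = 2 * c * ((a * t) ^ σ) := by
        rw [mul_rpow ha.le ht.le, htσ, rpow_add ha, rpow_one]; field_simp
    _ ≤ 2 * c * ((4 * b) ^ σ) := by gcongr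
    _ ≤ 8 * c * b ^ σ := by
        rw [mul_rpow (by norm_num) hb.le]
        nlinarith [mul_pos hc (rpow_pos_of_pos hb σ)]

theorem log_le_of_forall_le_div_add_rpow_mul {a b c σ : ℝ} (ha : 0 < a) (hb : 0 < b)
    (hc : 0 < c) (hσ0 : 0 < σ) (hσ1 : σ ≤ 1) (h : ∀ t > 0, a ≤ 2 * b / t + t ^ σ * c) :
    (1 + σ) * log a ≤ log 8 + log c + σ * log b := by
  have := log_le_log (by positivity)
    (rpow_one_add_le_of_forall_le_div_add_rpow_mul ha hb hc hσ0 hσ1 h)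
  rwa [log_rpow ha, log_mul (by positivity) (by positivity), log_mul (by norm_num) hc.ne',
    log_rpow hb] at this

theorem le_mul_rpow_mul_rpow_of_landau_chain_of_pos {P : ℕ → ℝ} {Q τ : ℝ} {m : ℕ}
    (hP : ∀ j, 0 < P j) (hQ : 0 < Q) (hτ0 : 0 < τ) (hτ1 : τ ≤ 1) (hm : 0 < m)
    (hmid : ∀ j, j + 2 ≤ m → ∀ t > 0, P (j + 1) ≤ 2 * P j / t + t * P (j + 2))
    (htop : ∀ t > 0, P m ≤ 2 * P (m - 1) / t + t ^ τ * Q) {k : ℕ} (hkm : k ≤ m) :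
    P k ≤ 8 ^ (m + 1) ^ 2 * P 0 ^ (1 - k / (m + τ)) * Q ^ (k / (m + τ)) := by
  have hlogmid : ∀ j, j + 2 ≤ m → 2 * log (P (j + 1)) ≤ log 8 + log (P j) + log (P (j + 2)) := by
    intro j hj
    have := log_le_of_forall_le_div_add_rpow_mul (hP (j + 1)) (hP j) (hP (j + 2)) one_pos le_rfl
      (by simpa only [rpow_one] using hmid j hj)
    linarith
  have hlogtop := log_le_of_forall_le_div_add_rpow_mul (hP m) (hP (m - 1)) hQ hτ0 hτ1 htop
  have key := le_of_convex_seq_up_to_defect (p := fun j => log (P j)) (log_nonneg (by norm_num))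
    hlogmid (q := log Q) (by linarith) hm hkm hτ0.le hτ1
  have h8 : (0 : ℝ) < 8 ^ (m + 1) ^ 2 := by positivity
  have hP0 := rpow_pos_of_pos (hP 0) (1 - k / (m + τ))
  have hQθ := rpow_pos_of_pos hQ (k / (m + τ))
  rw [← log_le_log_iff (hP k) (by positivity), log_mul (by positivity) hQθ.ne',
    log_mul h8.ne' hP0.ne', log_pow, log_rpow (hP 0), log_rpow hQ]
  push_cast at key ⊢
  linarith

theorem add_le_div_add_rpow_mul_add {a b c σ t δ : ℝ} (ht : 0 < t) (hσ : 0 ≤ σ) (hδ : 0 ≤ δ)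
    (h : a ≤ 2 * b / t + t ^ σ * c) : a + δ ≤ 2 * (b + δ) / t + t ^ σ * (c + δ) := by
  have hδ' : δ ≤ 2 * δ / t + t ^ σ * δ := by
    have := rpow_nonneg ht.le σ
    rcases le_or_gt t 2 with ht2 | ht2
    · have : δ ≤ 2 * δ / t := by rw [le_div_iff₀ ht]; nlinarith
      nlinarith
    · have : 1 ≤ t ^ σ := one_le_rpow (by linarith) hσ
      have : 0 ≤ 2 * δ / t := by positivity
      nlinarith
  calc a + δ ≤ 2 * b / t + t ^ σ * c + (2 * δ / t + t ^ σ * δ) := add_le_add h hδ'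
    _ = 2 * (b + δ) / t + t ^ σ * (c + δ) := by ring

theorem le_mul_rpow_mul_rpow_of_landau_chain {a : ℕ → ℝ} {Q τ : ℝ} {m : ℕ}
    (ha : ∀ j, 0 ≤ a j) (hQ : 0 ≤ Q) (hτ0 : 0 < τ) (hτ1 : τ ≤ 1) (hm : 0 < m)
    (hmid : ∀ j, j + 2 ≤ m → ∀ t > 0, a (j + 1) ≤ 2 * a j / t + t * a (j + 2))
    (htop : ∀ t > 0, a m ≤ 2 * a (m - 1) / t + t ^ τ * Q) {k : ℕ} (hkm : k ≤ m) :
    a k ≤ 8 ^ (m + 1) ^ 2 * a 0 ^ (1 - k / (m + τ)) * Q ^ (k / (m + τ)) := by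
  set θ : ℝ := k / (m + τ)
  have hθ0 : 0 ≤ θ := by positivity
  have hθ1 : 0 ≤ 1 - θ := by
    rw [sub_nonneg, div_le_one (by positivity)]
    have : (k : ℝ) ≤ m := by exact_mod_cast hkm
    linarith
  have hperturbed : ∀ δ > 0, a k ≤ 8 ^ (m + 1) ^ 2 * (a 0 + δ) ^ (1 - θ) * (Q + δ) ^ θ := by
    intro δ hδ
    have := le_mul_rpow_mul_rpow_of_landau_chain_of_pos (P := fun j => a j + δ) (Q := Q + δ)
      (fun j => by linarith [ha j]) (by linarith) hτ0 hτ1 hm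
      (fun j hj t ht => by
        simpa only [rpow_one] using add_le_div_add_rpow_mul_add ht zero_le_one hδ.le
          (by simpa only [rpow_one] using hmid j hj t ht))
      (fun t ht => add_le_div_add_rpow_mul_add ht hτ0.le hδ.le (htop t ht)) hkm
    linarith
  have hcont : Continuous fun δ : ℝ => 8 ^ (m + 1) ^ 2 * (a 0 + δ) ^ (1 - θ) * (Q + δ) ^ θ := by
    fun_prop (disch := exact fun _ => Or.inr ‹_›)
  have hlim := (hcont.tendsto 0).mono_left (nhdsWithin_le_nhds (s := Ioi 0))
  simp only [add_zero] at hlim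
  exact ge_of_tendsto hlim (eventually_nhdsWithin_of_forall hperturbed)

theorem rpow_one_sub_mul_rpow_le_of_le {a b s t : ℝ} (ha : 0 ≤ a) (hab : a ≤ b) (hs : 0 ≤ s)
    (hst : s ≤ t) (ht : t ≤ 1) : a ^ (1 - s) * b ^ s ≤ a ^ (1 - t) * b ^ t := by
  have hsplit : 1 - s = (1 - t) + (t - s) := by ring
  have hb : 0 ≤ b := ha.trans hab
  calc a ^ (1 - s) * b ^ s = a ^ (1 - t) * (a ^ (t - s) * b ^ s) := by
        rw [hsplit, rpow_add_of_nonneg ha (by linarith) (by linarith), mul_assoc]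
    _ ≤ a ^ (1 - t) * (b ^ (t - s) * b ^ s) := by gcongr
    _ = a ^ (1 - t) * b ^ t := by
        rw [← rpow_add_of_nonneg hb (by linarith) hs, sub_add_cancel]

section Landau

variable {E G : Type*} [NormedAddCommGroup E] [NormedSpace ℝ E] [NormedAddCommGroup G]
  [NormedSpace ℝ G]

theorem norm_fderiv_le_of_norm_le_of_holder {g : E → G} (hg : Differentiable ℝ g) {S K σ t : ℝ}
    (hS : ∀ x, ‖g x‖ ≤ S) (hK0 : 0 ≤ K) (hσ : 0 ≤ σ)
    (hK : ∀ x y, ‖fderiv ℝ g x - fderiv ℝ g y‖ ≤ K * ‖x - y‖ ^ σ) (ht : 0 < t) (x : E) :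
    ‖fderiv ℝ g x‖ ≤ 2 * S / t + t ^ σ * K := by
  have hS0 : 0 ≤ S := (norm_nonneg _).trans (hS x)
  refine ContinuousLinearMap.opNorm_le_of_unit_norm (by positivity) fun v hv => ?_
  have hyx : (x + t • v) - x = t • v := add_sub_cancel_left x _
  have hmvt : ‖g (x + t • v) - g x - fderiv ℝ g x (t • v)‖ ≤ t ^ σ * K * t := by
    have := (convex_closedBall x t).norm_image_sub_le_of_norm_fderiv_le' (C := t ^ σ * K)
      (fun z _ => hg z) (fun z hz => (hK z x).trans (by
        rw [mul_comm]
        gcongr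
        exact mem_closedBall_iff_norm.mp hz))
      (Metric.mem_closedBall_self ht.le) (y := x + t • v) (by
        rw [mem_closedBall_iff_norm, hyx, norm_smul, hv, Real.norm_of_nonneg ht.le, mul_one])
    rwa [hyx, norm_smul, hv, Real.norm_of_nonneg ht.le, mul_one] at this
  have hdiff : ‖g (x + t • v) - g x‖ ≤ 2 * S := by
    linarith [norm_sub_le (g (x + t • v)) (g x), hS x, hS (x + t • v)]
  have hlin : t * ‖fderiv ℝ g x v‖ ≤ 2 * S + t ^ σ * K * t := by
    have : t * ‖fderiv ℝ g x v‖ = ‖fderiv ℝ g x (t • v)‖ := by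
      rw [map_smul, norm_smul, Real.norm_of_nonneg ht.le]
    have htri := norm_sub_le (g (x + t • v) - g x) (g (x + t • v) - g x - fderiv ℝ g x (t • v))
    rw [sub_sub_cancel] at htri
    linarith
  have := (le_div_iff₀' ht).mpr hlin
  rwa [add_div, mul_div_cancel_right₀ _ ht.ne'] at this

theorem norm_iteratedFDeriv_succ_le_of_holder {f : E → G} {j : ℕ}
    (hf : Differentiable ℝ (iteratedFDeriv ℝ j f)) {S K σ t : ℝ}
    (hS : ∀ x, ‖iteratedFDeriv ℝ j f x‖ ≤ S) (hK0 : 0 ≤ K) (hσ : 0 ≤ σ)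
    (hK : ∀ x y, ‖iteratedFDeriv ℝ (j + 1) f x - iteratedFDeriv ℝ (j + 1) f y‖ ≤ K * ‖x - y‖ ^ σ)
    (ht : 0 < t) (x : E) : ‖iteratedFDeriv ℝ (j + 1) f x‖ ≤ 2 * S / t + t ^ σ * K := by
  rw [← norm_fderiv_iteratedFDeriv]
  refine norm_fderiv_le_of_norm_le_of_holder hf hS hK0 hσ (fun x y => ?_) ht x
  rw [fderiv_iteratedFDeriv, Function.comp_apply, Function.comp_apply,
    ← LinearIsometryEquiv.map_sub, LinearIsometryEquiv.norm_map]
  exact hK x y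

end Landau

section HolderSpace

variable {n : ℕ} {F : Type*} [NormedAddCommGroup F] {τ : ℝ}

theorem holderSemi_nonneg (τ : ℝ) (g : EuclideanSpace ℝ (Fin n) → F) : 0 ≤ holderSemi τ g :=
  Real.iSup_nonneg fun _ => by split_ifs <;> positivity

theorem norm_sub_le_holderSemi_mul {g : EuclideanSpace ℝ (Fin n) → F} (hτ : 0 < τ) {C : ℝ}
    (hC : ∀ x y, ‖g x - g y‖ ≤ C * ‖x - y‖ ^ τ) (x y : EuclideanSpace ℝ (Fin n)) :
    ‖g x - g y‖ ≤ holderSemi τ g * ‖x - y‖ ^ τ := by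
  rcases eq_or_ne x y with rfl | hxy
  · simp [zero_rpow hτ.ne']
  have hpos {x y : EuclideanSpace ℝ (Fin n)} (hxy : x ≠ y) : 0 < ‖x - y‖ ^ τ :=
    rpow_pos_of_pos (norm_pos_iff.mpr (sub_ne_zero.mpr hxy)) τ
  rw [← div_le_iff₀ (hpos hxy), holderSemi]
  refine le_trans (by simp [hxy]) (le_ciSup ⟨max C 0, forall_mem_range.mpr fun p => ?_⟩ (x, y))
  split_ifs with hp
  · exact le_max_right _ _
  · exact le_max_of_le_left <| (div_le_iff₀ (hpos hp)).mpr (hC p.1 p.2)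

variable [NormedSpace ℝ F] {f : EuclideanSpace ℝ (Fin n) → F} {m j : ℕ}

def iteratedFDerivSupNorm (j : ℕ) (f : EuclideanSpace ℝ (Fin n) → F) : ℝ :=
  ⨆ x, ‖iteratedFDeriv ℝ j f x‖

theorem iteratedFDerivSupNorm_nonneg (j : ℕ) (f : EuclideanSpace ℝ (Fin n) → F) :
    0 ≤ iteratedFDerivSupNorm j f :=
  Real.iSup_nonneg fun _ => norm_nonneg _

theorem cbNorm_zero (f : EuclideanSpace ℝ (Fin n) → F) :
    CbNorm 0 f = iteratedFDerivSupNorm 0 f :=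
  ciSup_unique (s := fun i : Fin 1 => iteratedFDerivSupNorm i f)

theorem iteratedFDerivSupNorm_le_cmTauNorm (hj : j ≤ m) (τ : ℝ)
    (f : EuclideanSpace ℝ (Fin n) → F) :
    iteratedFDerivSupNorm j f ≤ CmTauNorm m τ f := by
  have hCb : iteratedFDerivSupNorm j f ≤ CbNorm m f :=
    le_ciSup (f := fun i : Fin (m + 1) => iteratedFDerivSupNorm i f) (Finite.bddAbove_range _)
      ⟨j, Nat.lt_succ_of_le hj⟩
  have : 0 ≤ ⨆ i : Fin (m + 1), holderSemi τ (iteratedFDeriv ℝ i.val f) :=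
    Real.iSup_nonneg fun _ => holderSemi_nonneg _ _
  unfold CmTauNorm
  linarith

theorem holderSemi_le_cmTauNorm (m : ℕ) (τ : ℝ) (f : EuclideanSpace ℝ (Fin n) → F) :
    holderSemi τ (iteratedFDeriv ℝ m f) ≤ CmTauNorm m τ f := by
  have hsup : holderSemi τ (iteratedFDeriv ℝ m f)
      ≤ ⨆ i : Fin (m + 1), holderSemi τ (iteratedFDeriv ℝ i.val f) :=
    le_ciSup (f := fun i : Fin (m + 1) => holderSemi τ (iteratedFDeriv ℝ i.val f))
      (Finite.bddAbove_range _) (Fin.last m)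
  have : 0 ≤ CbNorm m f := Real.iSup_nonneg fun _ => iteratedFDerivSupNorm_nonneg _ _
  unfold CmTauNorm
  linarith

namespace MemHolderSpace

theorem norm_iteratedFDeriv_le (hf : MemHolderSpace m τ f) (hj : j ≤ m)
    (x : EuclideanSpace ℝ (Fin n)) :
    ‖iteratedFDeriv ℝ j f x‖ ≤ iteratedFDerivSupNorm j f := by
  obtain ⟨C, hC⟩ := hf.2.1 j hj
  exact le_ciSup ⟨C, forall_mem_range.mpr hC⟩ x

theorem differentiable_iteratedFDeriv (hf : MemHolderSpace m τ f) (hj : j < m) :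
    Differentiable ℝ (iteratedFDeriv ℝ j f) :=
  hf.1.differentiable_iteratedFDeriv (by exact_mod_cast hj)

theorem norm_iteratedFDeriv_sub_le (hf : MemHolderSpace m τ f) (hj : j < m)
    (x y : EuclideanSpace ℝ (Fin n)) :
    ‖iteratedFDeriv ℝ j f x - iteratedFDeriv ℝ j f y‖ ≤ iteratedFDerivSupNorm (j + 1) f * ‖x - y‖ :=
  convex_univ.norm_image_sub_le_of_norm_fderiv_le
    (fun z _ => hf.differentiable_iteratedFDeriv hj z)
    (fun z _ => by rw [norm_fderiv_iteratedFDeriv]; exact hf.norm_iteratedFDeriv_le hj z)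
    (mem_univ y) (mem_univ x)

theorem iteratedFDerivSupNorm_succ_le (hf : MemHolderSpace m τ f) (hj : j + 2 ≤ m) {t : ℝ}
    (ht : 0 < t) :
    iteratedFDerivSupNorm (j + 1) f
      ≤ 2 * iteratedFDerivSupNorm j f / t + t * iteratedFDerivSupNorm (j + 2) f := by
  refine ciSup_le fun x => ?_
  simpa only [rpow_one] using norm_iteratedFDeriv_succ_le_of_holder
    (hf.differentiable_iteratedFDeriv (by omega)) (hf.norm_iteratedFDeriv_le (by omega))
    (iteratedFDerivSupNorm_nonneg _ _) zero_le_one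
    (fun x y => by simpa only [rpow_one] using hf.norm_iteratedFDeriv_sub_le (by omega) x y) ht x

theorem iteratedFDerivSupNorm_top_le (hf : MemHolderSpace m τ f) (hτ : 0 < τ) (hm : 0 < m) {t : ℝ}
    (ht : 0 < t) :
    iteratedFDerivSupNorm m f
      ≤ 2 * iteratedFDerivSupNorm (m - 1) f / t + t ^ τ * CmTauNorm m τ f := by
  obtain ⟨C, hC⟩ := hf.2.2 m le_rfl
  refine ciSup_le fun x => ?_
  have := norm_iteratedFDeriv_succ_le_of_holder (j := m - 1)
    (hf.differentiable_iteratedFDeriv (by omega)) (hf.norm_iteratedFDeriv_le (by omega))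
    (holderSemi_nonneg _ _) hτ.le
    (by rw [Nat.sub_add_cancel hm]; exact norm_sub_le_holderSemi_mul hτ hC) ht x
  rw [Nat.sub_add_cancel hm] at this
  exact this.trans (by gcongr; exact holderSemi_le_cmTauNorm m τ f)

end MemHolderSpace

end HolderSpace

theorem holder_interpolation_general (n k m : ℕ) (hm : 0 < m) (hkm : k ≤ m)
    (τ : ℝ) (hτ0 : 0 < τ) (hτ1 : τ < 1) :
    ∃ C : ℝ, 0 < C ∧ ∀ f : EuclideanSpace ℝ (Fin n) → ℂ,
      MemHolderSpace m τ f →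
      CbNorm k f ≤ C * CbNorm 0 f ^ (1 - (k : ℝ) / ((m : ℝ) + τ))
        * CmTauNorm m τ f ^ ((k : ℝ) / ((m : ℝ) + τ)) := by
  refine ⟨8 ^ (m + 1) ^ 2, by positivity, fun f hf => ?_⟩
  have hM0 := iteratedFDerivSupNorm_le_cmTauNorm (Nat.zero_le m) τ f
  have hbound (i : ℕ) (hi : i ≤ m) := le_mul_rpow_mul_rpow_of_landau_chain
    (fun j => iteratedFDerivSupNorm_nonneg j f) ((iteratedFDerivSupNorm_nonneg 0 f).trans hM0)
    hτ0 hτ1.le hm (fun j hj t ht => hf.iteratedFDerivSupNorm_succ_le hj ht)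
    (fun t ht => hf.iteratedFDerivSupNorm_top_le hτ0 hm ht) hi
  rw [cbNorm_zero, mul_assoc]
  refine ciSup_le fun i => (hbound i (by omega)).trans ?_
  have hk : (k : ℝ) ≤ m := by exact_mod_cast hkm
  have hik : (i : ℝ) ≤ k := by exact_mod_cast Nat.lt_succ_iff.mp i.isLt
  rw [mul_assoc]
  refine mul_le_mul_of_nonneg_left (rpow_one_sub_mul_rpow_le_of_le
    (iteratedFDerivSupNorm_nonneg 0 f) hM0 (by positivity) (by gcongr) ?_) (by positivity)
  rw [div_le_one (by positivity)]
  linarith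

/-- interpolation inequality
`‖f‖_{C^k_b} ≤ C ‖f‖_{C^0_b}^{1-θ} ‖f‖_{C^{m,τ}}^{θ}` with `θ = k/(m+τ)`. -/
theorem holder_interpolation (n k m : ℕ) (hk : 0 < k) (hm : 0 < m) (hkm : k ≤ m)
    (τ : ℝ) (hτ0 : 0 < τ) (hτ1 : τ < 1) :
    ∃ C : ℝ, 0 < C ∧ ∀ f : EuclideanSpace ℝ (Fin n) → ℂ,
      MemHolderSpace m τ f →
      CbNorm k f ≤ C * CbNorm 0 f ^ (1 - (k : ℝ) / ((m : ℝ) + τ))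
        * CmTauNorm m τ f ^ ((k : ℝ) / ((m : ℝ) + τ)) :=
  holder_interpolation_general n k m hm hkm τ hτ0 hτ1
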